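/- Fix an integer N ≥ 1, reals λ_h > 0, a sign s ∈ {−1, 1}, β ∈ [1/(2N), 1−1/(2N)], and n ∈ ℤ. Let r : ℤ → ℝ be defined by r = 2λ_h·s·(β·Δ^{N-1}δ_n + (1−β)·Δ^{N-1}δ_{n+1}), and let y = g − r where |g[k]| < λ_h/(2N) for all k. Define M = {k : |y[k]| ≥ λ_h/(2N)}, k_m = min M, k_M = max M. Then k_m = n − N + 1, k_M = n + 1, and in particular k_M − k_m = N. -/

import Mathlib

/-- Kronecker delta at `n` on sequences `ℤ → ℝ`. -/
def kdelta (n : ℤ) : ℤ → ℝ := fun k => if k = n then 1 else 0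

/-- `N`-th forward finite difference. -/
def fd : ℕ → (ℤ → ℝ) → (ℤ → ℝ)
  | 0, f => f
  | N + 1, f => fun k => fd N f (k + 1) - fd N f k

lemma fd_succ (m : ℕ) (f : ℤ → ℝ) (k : ℤ) :
    fd (m + 1) f k = fd m f (k + 1) - fd m f k := rfl

lemma fd_zero_of_lt (m : ℕ) (a : ℤ) : ∀ k : ℤ, a < k → fd m (kdelta a) k = 0 := by
  induction m with
  | zero => intro k h; simp [fd, kdelta]; omega
  | succ m ih =>
    intro k h
    rw [fd_succ, ih k h, ih (k + 1) (by omega)]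
    ring

lemma fd_zero_of_gt (m : ℕ) (a : ℤ) : ∀ k : ℤ, k + m < a → fd m (kdelta a) k = 0 := by
  induction m with
  | zero => intro k h; simp [fd, kdelta]; omega
  | succ m ih =>
    intro k h
    push_cast at h
    rw [fd_succ, ih k (by omega), ih (k + 1) (by omega)]
    ring

lemma fd_at_right (m : ℕ) (a : ℤ) : fd m (kdelta a) a = (-1 : ℝ) ^ m := by
  induction m with
  | zero => simp [fd, kdelta]
  | succ m ih =>
    rw [fd_succ, ih, fd_zero_of_lt m a (a + 1) (by omega)]
    ring

lemma fd_at_left (m : ℕ) (a : ℤ) : fd m (kdelta a) (a - m) = 1 := by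
  induction m with
  | zero => simp [fd, kdelta]
  | succ m ih =>
    rw [fd_succ, fd_zero_of_gt m a (a - (m + 1 : ℕ)) (by push_cast; omega)]
    have h1 : a - ((m + 1 : ℕ) : ℤ) + 1 = a - m := by push_cast; omega
    rw [h1, ih]
    ring

theorem single_fold_threshold_set (N : ℕ) (hN : 1 ≤ N) (lamh : ℝ) (hlamh : 0 < lamh)
    (s : ℝ) (hs : s = 1 ∨ s = -1) (β : ℝ)
    (hβ0 : 1 / (2 * N) ≤ β) (hβ1 : β ≤ 1 - 1 / (2 * N)) (n : ℤ)
    (r y g : ℤ → ℝ)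
    (hr : r = fun k => 2 * lamh * s *
      (β * fd (N - 1) (kdelta n) k + (1 - β) * fd (N - 1) (kdelta (n + 1)) k))
    (hy : y = g - r)
    (hg : ∀ k : ℤ, |g k| < lamh / (2 * N)) :
    IsLeast {k : ℤ | |y k| ≥ lamh / (2 * N)} (n - N + 1) ∧
      IsGreatest {k : ℤ | |y k| ≥ lamh / (2 * N)} (n + 1) := by
  have hNR : (1 : ℝ) ≤ (N : ℝ) := by exact_mod_cast hN
  have hN2 : (0 : ℝ) < 2 * N := by linarith
  have hsabs : |s| = 1 := by rcases hs with h | h <;> simp [h]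
  have hcast : ((N - 1 : ℕ) : ℤ) = (N : ℤ) - 1 := by omega
  have hpow : |(-1 : ℝ) ^ (N - 1)| = 1 := by
    rw [abs_pow, abs_neg, abs_one, one_pow]
  -- value of y outside the window is small
  have houtside : ∀ k : ℤ, (k < n - N + 1 ∨ n + 1 < k) → |y k| < lamh / (2 * N) := by
    intro k hk
    have hr0 : r k = 0 := by
      rw [hr]
      beta_reduce
      rcases hk with hk | hk
      · rw [fd_zero_of_gt (N - 1) n k (by omega), fd_zero_of_gt (N - 1) (n + 1) k (by omega)]
        ring
      · rw [fd_zero_of_lt (N - 1) n k (by omega), fd_zero_of_lt (N - 1) (n + 1) k (by omega)]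
        ring
    have : y k = g k := by rw [hy]; simp [hr0]
    rw [this]; exact hg k
  -- a general membership estimate from |r k| ≥ lamh / N
  have hmem : ∀ k : ℤ, lamh / N ≤ |r k| → lamh / (2 * N) ≤ |y k| := by
    intro k hrk
    have hykeq : y k = g k - r k := by rw [hy]; rfl
    have h1 : |r k| - |g k| ≤ |y k| := by
      rw [hykeq]
      calc |r k| - |g k| ≤ |r k - g k| := abs_sub_abs_le_abs_sub _ _
        _ = |g k - r k| := abs_sub_comm _ _
    have h2 := hg k
    have h3 : lamh / N - lamh / (2 * N) = lamh / (2 * N) := by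
      field_simp; ring
    linarith
  -- membership at n + 1
  have hmR : lamh / (2 * N) ≤ |y (n + 1)| := by
    apply hmem
    have h1 : r (n + 1) = 2 * lamh * s * ((1 - β) * (-1 : ℝ) ^ (N - 1)) := by
      rw [hr]
      simp only
      rw [fd_zero_of_lt (N - 1) n (n + 1) (by omega), fd_at_right (N - 1) (n + 1)]
      ring
    rw [h1]
    have : |2 * lamh * s * ((1 - β) * (-1 : ℝ) ^ (N - 1))| = 2 * lamh * (1 - β) := by
      rw [abs_mul, abs_mul, abs_mul, abs_mul, hsabs, hpow]
      rw [abs_of_pos (by norm_num : (0:ℝ) < 2), abs_of_pos hlamh,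
        abs_of_nonneg (by nlinarith [div_pos (by norm_num : (0:ℝ)<1) hN2] : (0:ℝ) ≤ 1 - β)]
      ring
    rw [this]
    have hβ' : 1 / (2 * N) ≤ 1 - β := by linarith
    calc lamh / N = 2 * lamh * (1 / (2 * N)) := by field_simp
      _ ≤ 2 * lamh * (1 - β) := by nlinarith
  -- membership at n - N + 1
  have hmL : lamh / (2 * N) ≤ |y (n - N + 1)| := by
    apply hmem
    have hpt : n - (N : ℤ) + 1 = n - ((N - 1 : ℕ) : ℤ) := by omega
    have h1 : r (n - N + 1) = 2 * lamh * s * (β * 1) := by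
      rw [hr]
      simp only
      rw [hpt, fd_at_left (N - 1) n, fd_zero_of_gt (N - 1) (n + 1) (n - ((N - 1 : ℕ) : ℤ))
        (by omega)]
      ring
    rw [h1]
    have hβpos : (0 : ℝ) ≤ β := le_trans (by positivity) hβ0
    have : |2 * lamh * s * (β * 1)| = 2 * lamh * β := by
      rw [abs_mul, abs_mul, abs_mul, abs_mul, hsabs]
      rw [abs_of_pos (by norm_num : (0:ℝ) < 2), abs_of_pos hlamh, abs_of_nonneg hβpos, abs_one]
      ring
    rw [this]
    calc lamh / N = 2 * lamh * (1 / (2 * N)) := by field_simp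
      _ ≤ 2 * lamh * β := by nlinarith
  refine ⟨⟨hmL, ?_⟩, ⟨hmR, ?_⟩⟩
  · intro k hk
    by_contra h
    exact absurd hk (not_le.mpr (houtside k (Or.inl (by omega))))
  · intro k hk
    by_contra h
    exact absurd hk (not_le.mpr (houtside k (Or.inr (by omega))))
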